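/- Let n ∈ ℕ, α ∈ (0,2) with n > 2α, and p ∈ (1, ∞). If there exists a positive constant C such that ‖S_α(f)‖_{L^p(ℝⁿ)} ≤ C‖(−Δ)^{α/2} f‖_{L^p(ℝⁿ)} for every Schwartz function f on ℝⁿ, then p ≥ 2n/(2α+n). In particular, for p ∈ (1, 2n/(2α+n)) the characterization of W^{α,p}(ℝⁿ) by the area function S_α fails. -/

import Mathlib

open MeasureTheory Metric Complex
open scoped ENNReal FourierTransform RealInnerProductSpace

noncomputable section

/-- The average of `f` over the ball of center `x` and radius `t`:
`B_t f(x) = ⨍_{B(x,t)} f(y) dy`. -/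
def ballAvg {n : ℕ} (f : EuclideanSpace ℝ (Fin n) → ℂ) (t : ℝ)
    (x : EuclideanSpace ℝ (Fin n)) : ℂ :=
  ⨍ y in Metric.ball x t, f y

/-- The `L^p`-type norm `(∫ (F x)^p dμ)^{1/p}` of an `ℝ≥0∞`-valued function. -/
def lpNormE {α : Type*} [MeasurableSpace α] (F : α → ℝ≥0∞) (p : ℝ) (μ : Measure α) : ℝ≥0∞ :=
  (∫⁻ x, F x ^ p ∂μ) ^ (1 / p)

/-- The second order Lusin area function
`S(f,g)(x) = (∫₀^∞ ∫_{B(x,t)} |(B_t f(y) − f(y))/t² − B_t g(y)|² dy dt/t^{n+1})^{1/2}`. -/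
def lusinS2 (n : ℕ) (f g : EuclideanSpace ℝ (Fin n) → ℂ)
    (x : EuclideanSpace ℝ (Fin n)) : ℝ≥0∞ :=
  (∫⁻ t in Set.Ioi (0 : ℝ),
      (∫⁻ y in Metric.ball x t,
        (‖(ballAvg f t y - f y) / (t : ℂ) ^ 2 - ballAvg g t y‖₊ : ℝ≥0∞) ^ 2)
        / ENNReal.ofReal (t ^ (n + 1))) ^ (1 / 2 : ℝ)

/-- The fractional Lusin area function
`S_α(f)(x) = (∫₀^∞ ∫_{B(x,t)} |(B_t f(y) − f(y))/t^α|² dy dt/t^{n+1})^{1/2}`. -/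
def lusinSa (n : ℕ) (α : ℝ) (f : EuclideanSpace ℝ (Fin n) → ℂ)
    (x : EuclideanSpace ℝ (Fin n)) : ℝ≥0∞ :=
  (∫⁻ t in Set.Ioi (0 : ℝ),
      (∫⁻ y in Metric.ball x t,
        (‖(ballAvg f t y - f y) / ((t ^ α : ℝ) : ℂ)‖₊ : ℝ≥0∞) ^ 2)
        / ENNReal.ofReal (t ^ (n + 1))) ^ (1 / 2 : ℝ)

/-- The classical Laplacian `Δφ = Σᵢ ∂²φ/∂xᵢ²`. -/
def lap {n : ℕ} (φ : EuclideanSpace ℝ (Fin n) → ℂ) (x : EuclideanSpace ℝ (Fin n)) : ℂ :=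
  ∑ i : Fin n,
    fderiv ℝ (fun y => fderiv ℝ φ y (EuclideanSpace.single i 1)) x (EuclideanSpace.single i 1)

/-- `g` is the distributional Laplacian of `f`, i.e. `∫ f Δφ = ∫ g φ`
for every Schwartz test function `φ`. -/
def HasDistribLap {n : ℕ} (f g : EuclideanSpace ℝ (Fin n) → ℂ) : Prop :=
  ∀ φ : SchwartzMap (EuclideanSpace ℝ (Fin n)) ℂ,
    ∫ x, f x * lap (⇑φ) x = ∫ x, g x * φ x

/-- The fractional Laplacian `(−Δ)^{α/2}` of a (Schwartz class) function, defined via the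
Fourier transform as the Fourier multiplier with symbol `|ξ|^α` (in the `e^{-ix·ξ}`
normalization; equivalently `(2π|ξ|)^α` in the Mathlib normalization of `𝓕`). -/
def fracLapFun {n : ℕ} (α : ℝ) (φ : EuclideanSpace ℝ (Fin n) → ℂ) :
    EuclideanSpace ℝ (Fin n) → ℂ :=
  𝓕⁻ (fun ξ => (((2 * Real.pi * ‖ξ‖) ^ α : ℝ) : ℂ) * 𝓕 φ ξ)

/-- `g = (−Δ)^{α/2} f` in the sense of tempered distributions:
`∫ f · (−Δ)^{α/2}φ = ∫ g · φ` for every Schwartz test function `φ`. -/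
def HasFracLap {n : ℕ} (α : ℝ) (f g : EuclideanSpace ℝ (Fin n) → ℂ) : Prop :=
  ∀ φ : SchwartzMap (EuclideanSpace ℝ (Fin n)) ℂ,
    ∫ x, f x * fracLapFun α (⇑φ) x = ∫ x, g x * φ x

/-- The Fourier transform of the normalized indicator of the unit ball,
`χ̂(ξ) = (1/|B(0,1)|) ∫_{B(0,1)} e^{−i x·ξ} dx`. -/
def chiHat (n : ℕ) (ξ : EuclideanSpace ℝ (Fin n)) : ℂ :=
  ⨍ x in Metric.ball (0 : EuclideanSpace ℝ (Fin n)) 1,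
    Complex.exp (-Complex.I * ((inner ℝ x ξ : ℝ) : ℂ))

/-- The area function `S(F)` of a measurable function on `ℝⁿ × (0,∞)`. -/
def sqS (n : ℕ) (F : EuclideanSpace ℝ (Fin n) × ℝ → ℝ)
    (x : EuclideanSpace ℝ (Fin n)) : ℝ≥0∞ :=
  (∫⁻ t in Set.Ioi (0 : ℝ),
      (∫⁻ y in Metric.ball x t, (‖F (y, t)‖₊ : ℝ≥0∞) ^ 2)
        / ENNReal.ofReal (t ^ (n + 1))) ^ (1 / 2 : ℝ)

/-- The Littlewood–Paley `g`-function `G(F)` of a measurable function on `ℝⁿ × (0,∞)`. -/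
def sqG (n : ℕ) (F : EuclideanSpace ℝ (Fin n) × ℝ → ℝ)
    (x : EuclideanSpace ℝ (Fin n)) : ℝ≥0∞ :=
  (∫⁻ t in Set.Ioi (0 : ℝ), (‖F (x, t)‖₊ : ℝ≥0∞) ^ 2 / ENNReal.ofReal t) ^ (1 / 2 : ℝ)

/-- The Littlewood–Paley `g*_λ`-function `G*_λ(F)` of a measurable function on
`ℝⁿ × (0,∞)`. -/
def sqGstar (n : ℕ) (lam : ℝ) (F : EuclideanSpace ℝ (Fin n) × ℝ → ℝ)
    (x : EuclideanSpace ℝ (Fin n)) : ℝ≥0∞ :=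
  (∫⁻ t in Set.Ioi (0 : ℝ),
      (∫⁻ y, (‖F (y, t)‖₊ : ℝ≥0∞) ^ 2
          * ENNReal.ofReal ((t / (t + dist x y)) ^ (lam * n)))
        / ENNReal.ofReal (t ^ (n + 1))) ^ (1 / 2 : ℝ)

/-- The fractional Littlewood–Paley function `g*_{α,λ}(f)`. -/
def gstarA (n : ℕ) (α lam : ℝ) (f : EuclideanSpace ℝ (Fin n) → ℂ)
    (x : EuclideanSpace ℝ (Fin n)) : ℝ≥0∞ :=
  (∫⁻ t in Set.Ioi (0 : ℝ),
      (∫⁻ y, (‖(ballAvg f t y - f y) / ((t ^ α : ℝ) : ℂ)‖₊ : ℝ≥0∞) ^ 2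
          * ENNReal.ofReal ((t / (t + dist x y)) ^ (lam * n)))
        / ENNReal.ofReal (t ^ (n + 1))) ^ (1 / 2 : ℝ)

/-- The second order Littlewood–Paley function `g*_λ(f,g)`. -/
def gstar2 (n : ℕ) (lam : ℝ) (f g : EuclideanSpace ℝ (Fin n) → ℂ)
    (x : EuclideanSpace ℝ (Fin n)) : ℝ≥0∞ :=
  (∫⁻ t in Set.Ioi (0 : ℝ),
      (∫⁻ y, (‖(ballAvg f t y - f y) / (t : ℂ) ^ 2 - ballAvg g t y‖₊ : ℝ≥0∞) ^ 2
          * ENNReal.ofReal ((t / (t + dist x y)) ^ (lam * n)))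
        / ENNReal.ofReal (t ^ (n + 1))) ^ (1 / 2 : ℝ)

/-- `𝒦̂(ξ) = (χ̂(ξ) − 1)/|ξ|² + χ̂(ξ)/(2n+4)`. -/
def KHat (n : ℕ) (ξ : EuclideanSpace ℝ (Fin n)) : ℂ :=
  (chiHat n ξ - 1) / ((‖ξ‖ ^ 2 : ℝ) : ℂ) + chiHat n ξ / (2 * (n : ℂ) + 4)

/-- A radial function on `ℝⁿ`. -/
def IsRadial {n : ℕ} (φ : EuclideanSpace ℝ (Fin n) → ℂ) : Prop :=
  ∀ x y : EuclideanSpace ℝ (Fin n), ‖x‖ = ‖y‖ → φ x = φ y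

/-- `F_{j,k,t}`: the inverse Fourier transform of
`ξ ↦ φ̂(2^{−j−k}ξ)·((χ̂(tξ) − 1)/(t|ξ|)^α)·f̂(ξ)`. -/
def Fjkt (n : ℕ) (α : ℝ) (φ f : EuclideanSpace ℝ (Fin n) → ℂ) (j k : ℤ) (t : ℝ) :
    EuclideanSpace ℝ (Fin n) → ℂ :=
  𝓕⁻ (fun ξ => 𝓕 φ (((2 : ℝ) ^ (-(j + k)) : ℝ) • ξ)
      * ((chiHat n (t • ξ) - 1) / ((((t * ‖ξ‖) ^ α : ℝ)) : ℂ)) * 𝓕 f ξ)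

/-- The square function
`T_j(f)(x) = (Σ_{k∈ℤ} ∫_{2^{−k}}^{2^{−k+1}} ⨍_{B(0,2^{−k+1})} |F_{j,k,t}(x+y)|² dy dt/t)^{1/2}`. -/
def Tj (n : ℕ) (α : ℝ) (φ f : EuclideanSpace ℝ (Fin n) → ℂ) (j : ℤ)
    (x : EuclideanSpace ℝ (Fin n)) : ℝ≥0∞ :=
  (∑' k : ℤ, ∫⁻ t in Set.Ioc ((2 : ℝ) ^ (-k)) ((2 : ℝ) ^ (-k + 1)),
      ((∫⁻ y in Metric.ball (0 : EuclideanSpace ℝ (Fin n)) ((2 : ℝ) ^ (-k + 1)),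
          (‖Fjkt n α φ f j k t (x + y)‖₊ : ℝ≥0∞) ^ 2)
        / volume (Metric.ball (0 : EuclideanSpace ℝ (Fin n)) ((2 : ℝ) ^ (-k + 1))))
        / ENNReal.ofReal t) ^ (1 / 2 : ℝ)

/-- `G_{j,k,t}`: the inverse Fourier transform of
`ξ ↦ φ̂(2^{−j−k}ξ)·[(χ̂(tξ) − 1)/(t|ξ|)² + χ̂(tξ)/(2n+4)]·f̂(ξ)`. -/
def Gjkt (n : ℕ) (φ f : EuclideanSpace ℝ (Fin n) → ℂ) (j k : ℤ) (t : ℝ) :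
    EuclideanSpace ℝ (Fin n) → ℂ :=
  𝓕⁻ (fun ξ => 𝓕 φ (((2 : ℝ) ^ (-(j + k)) : ℝ) • ξ)
      * ((chiHat n (t • ξ) - 1) / ((((t * ‖ξ‖) ^ 2 : ℝ)) : ℂ)
          + chiHat n (t • ξ) / (2 * (n : ℂ) + 4)) * 𝓕 f ξ)

/-- The square function
`𝒯_j(f)(x) = (Σ_{k∈ℤ} ∫_{2^{−k}}^{2^{−k+1}} ⨍_{B(0,2^{−k+1})} |G_{j,k,t}(x+y)|² dy dt/t)^{1/2}`. -/
def Tcj (n : ℕ) (φ f : EuclideanSpace ℝ (Fin n) → ℂ) (j : ℤ)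
    (x : EuclideanSpace ℝ (Fin n)) : ℝ≥0∞ :=
  (∑' k : ℤ, ∫⁻ t in Set.Ioc ((2 : ℝ) ^ (-k)) ((2 : ℝ) ^ (-k + 1)),
      ((∫⁻ y in Metric.ball (0 : EuclideanSpace ℝ (Fin n)) ((2 : ℝ) ^ (-k + 1)),
          (‖Gjkt n φ f j k t (x + y)‖₊ : ℝ≥0∞) ^ 2)
        / volume (Metric.ball (0 : EuclideanSpace ℝ (Fin n)) ((2 : ℝ) ^ (-k + 1))))
        / ENNReal.ofReal t) ^ (1 / 2 : ℝ)

/-!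
Take `ψ = 𝓕⁻¹ h` with `h` a smooth bump supported in the annulus `1/2 ≤ |ξ| ≤ 3/2`. Its fractional
Laplacian is the inverse Fourier transform of the smooth compactly supported `|ξ|^α h`, hence a
Schwartz function, so the right-hand side of the assumed inequality is finite. On the other hand
`ψ(0) = ∫ h ≠ 0`, while averages of the integrable `ψ` over large balls are small, so
`|B_t ψ − ψ|` stays bounded below on a fixed ball `B(0, δ)` once `t` is large. For `|x|` large and
`t ∈ (2|x|, 3|x|]` the ball `B(x, t)` contains `B(0, δ)`, whence `S_α(ψ)(x)² ≳ |x|^{-(2α+n)}`.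
Then `S_α(ψ)^p ≳ |x|^{-(2α+n)p/2}` is not integrable at infinity when `(2α+n)p/2 ≤ n`, that is when
`p ≤ 2n/(2α+n)`, and the left-hand side is infinite.
-/

open scoped ContDiff Topology

section PowerDecay

variable {E : Type*} [NormedAddCommGroup E] [NormedSpace ℝ E] [Nontrivial E]
  [FiniteDimensional ℝ E] [MeasurableSpace E] [BorelSpace E]
  (μ : Measure E) [μ.IsAddHaarMeasure]

theorem not_integrable_indicator_rpow_neg_norm {R s : ℝ} (hR : 0 < R)
    (hs : s ≤ Module.finrank ℝ E) :
    ¬ Integrable (fun x : E => (Set.Ici R).indicator (fun r => r ^ (-s)) ‖x‖) μ := by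
  rw [integrable_fun_norm_addHaar μ]
  intro h
  have hpow : IntegrableOn (fun y : ℝ => y ^ ((Module.finrank ℝ E : ℝ) - 1 - s)) (Set.Ioi R) := by
    refine (h.mono_set (Set.Ioi_subset_Ioi hR.le)).congr_fun (fun y hy => ?_) measurableSet_Ioi
    have hy0 : 0 < y := hR.trans hy
    dsimp only
    rw [Set.indicator_of_mem (Set.mem_Ici.2 (le_of_lt hy)), smul_eq_mul,
      ← Real.rpow_natCast, ← Real.rpow_add hy0, Nat.cast_sub Module.finrank_pos]
    ring_nf
  rw [integrableOn_Ioi_rpow_iff hR] at hpow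
  linarith

theorem lintegral_eq_top_of_ofReal_rpow_neg_norm_le {S : E → ℝ≥0∞} {c R s : ℝ} (hc : 0 < c)
    (hR : 0 < R) (hs : s ≤ Module.finrank ℝ E)
    (hS : ∀ x, R ≤ ‖x‖ → ENNReal.ofReal (c * ‖x‖ ^ (-s)) ≤ S x) :
    ∫⁻ x, S x ∂μ = ⊤ := by
  set g : E → ℝ := fun x => (Set.Ici R).indicator (fun r => r ^ (-s)) ‖x‖
  have hg_le : ∀ x, ENNReal.ofReal (c * g x) ≤ S x := by
    intro x
    by_cases hx : R ≤ ‖x‖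
    · simpa [g, hx] using hS x hx
    · simp [g, hx]
  have hg_meas : Measurable g :=
    ((by fun_prop : Measurable fun r : ℝ => r ^ (-s)).indicator measurableSet_Ici).comp
      measurable_norm
  have hg_nonneg : ∀ x, 0 ≤ g x := fun x =>
    Set.indicator_nonneg (fun r hr => Real.rpow_nonneg (hR.le.trans hr) _) _
  by_contra hfin
  refine not_integrable_indicator_rpow_neg_norm μ hR hs ?_
  have hcg : Integrable (fun x => c * g x) μ :=
    ⟨(hg_meas.const_mul c).aestronglyMeasurable,
      (hasFiniteIntegral_iff_ofReal (ae_of_all _ fun x => mul_nonneg hc.le (hg_nonneg x))).2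
        ((lintegral_mono hg_le).trans_lt (lt_top_iff_ne_top.2 hfin))⟩
  simpa [hc.ne'] using hcg.const_mul c⁻¹

end PowerDecay

section BallAverage

variable {n : ℕ}

theorem norm_ballAvg_le {f : EuclideanSpace ℝ (Fin n) → ℂ} (hf : Integrable f) (t : ℝ)
    (y : EuclideanSpace ℝ (Fin n)) :
    ‖ballAvg f t y‖ ≤ (∫ x, ‖f x‖) / volume.real (ball y t) := by
  rw [ballAvg, setAverage_eq, norm_smul, Real.norm_eq_abs, abs_inv,
    abs_of_nonneg measureReal_nonneg, inv_mul_eq_div]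
  gcongr
  exact (norm_integral_le_integral_norm f).trans
    (integral_mono_measure Measure.restrict_le_self (ae_of_all _ fun x => norm_nonneg _) hf.norm)

theorem measureReal_ball_eq_pow_mul (y : EuclideanSpace ℝ (Fin n)) {t : ℝ} (ht : 0 < t) :
    volume.real (ball y t) = t ^ n * volume.real (ball (0 : EuclideanSpace ℝ (Fin n)) 1) := by
  simp only [Measure.real]
  rw [Measure.addHaar_ball_of_pos volume y ht, ENNReal.toReal_mul,
    finrank_euclideanSpace_fin, ENNReal.toReal_ofReal (by positivity)]

theorem exists_forall_norm_ballAvg_le (hn : 0 < n) {f : EuclideanSpace ℝ (Fin n) → ℂ}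
    (hf : Integrable f) {ε : ℝ} (hε : 0 < ε) :
    ∃ T > 0, ∀ t ≥ T, ∀ y, ‖ballAvg f t y‖ ≤ ε := by
  set v := volume.real (ball (0 : EuclideanSpace ℝ (Fin n)) 1)
  have hv : 0 < v :=
    ENNReal.toReal_pos (measure_ball_pos volume 0 one_pos).ne' measure_ball_lt_top.ne
  refine ⟨max 1 ((∫ x, ‖f x‖) / (ε * v)), by positivity, fun t ht y => ?_⟩
  have ht1 : 1 ≤ t := le_of_max_le_left ht
  have htn : t ≤ t ^ n := le_self_pow₀ ht1 hn.ne'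
  rw [ge_iff_le, max_le_iff, div_le_iff₀ (by positivity)] at ht
  calc ‖ballAvg f t y‖ ≤ (∫ x, ‖f x‖) / (t ^ n * v) := by
        rw [← measureReal_ball_eq_pow_mul y (by linarith)]; exact norm_ballAvg_le hf t y
    _ ≤ ε := by
        rw [div_le_iff₀ (by positivity)]
        nlinarith [ht.2, mul_le_mul_of_nonneg_left htn (by positivity : 0 ≤ ε * v)]

theorem exists_le_norm_ballAvg_sub (hn : 0 < n) {f : EuclideanSpace ℝ (Fin n) → ℂ}
    (hf : Integrable f) (hf0 : ContinuousAt f 0) {a : ℝ} (ha : a < ‖f 0‖) :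
    ∃ δ > 0, ∃ T > 0, ∀ t ≥ T, ∀ y ∈ closedBall 0 δ, a ≤ ‖ballAvg f t y - f y‖ := by
  have hε : 0 < (‖f 0‖ - a) / 2 := half_pos (sub_pos.2 ha)
  obtain ⟨δ, hδ, hcont⟩ := Metric.continuousAt_iff.1 hf0 _ hε
  obtain ⟨T, hT, havg⟩ := exists_forall_norm_ballAvg_le hn hf hε
  refine ⟨δ / 2, half_pos hδ, T, hT, fun t ht y hy => ?_⟩
  have hfy : ‖f 0 - f y‖ < (‖f 0‖ - a) / 2 := by
    rw [← dist_eq_norm, dist_comm]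
    exact hcont ((mem_closedBall.1 hy).trans_lt (half_lt_self hδ))
  calc a ≤ ‖f y‖ - ‖ballAvg f t y‖ := by
        linarith [havg t ht y, norm_sub_norm_le (f 0) (f y)]
    _ ≤ ‖ballAvg f t y - f y‖ := by
        rw [norm_sub_rev]
        exact norm_sub_norm_le _ _

end BallAverage

theorem ofReal_sq_mul_measure_le_setLIntegral {X F : Type*} [MeasurableSpace X]
    [NormedAddCommGroup F] {μ : Measure X} {g : X → F} {K B : Set X} {a : ℝ} (ha : 0 ≤ a)
    (hK : MeasurableSet K) (hKB : K ⊆ B) (hg : ∀ y ∈ K, a ≤ ‖g y‖) :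
    ENNReal.ofReal (a ^ 2) * μ K ≤ ∫⁻ y in B, (‖g y‖₊ : ℝ≥0∞) ^ 2 ∂μ := by
  rw [← setLIntegral_const]
  refine (setLIntegral_mono' hK fun y hy => ?_).trans (lintegral_mono_set hKB)
  rw [← ENNReal.ofReal_coe_nnreal, coe_nnnorm, ← ENNReal.ofReal_pow (norm_nonneg _)]
  exact ENNReal.ofReal_le_ofReal (pow_le_pow_left₀ ha (hg y hy) 2)

section LusinArea

def lusinSaDensity (n : ℕ) (α : ℝ) (f : EuclideanSpace ℝ (Fin n) → ℂ)
    (x : EuclideanSpace ℝ (Fin n)) (t : ℝ) : ℝ≥0∞ :=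
  (∫⁻ y in ball x t, (‖(ballAvg f t y - f y) / ((t ^ α : ℝ) : ℂ)‖₊ : ℝ≥0∞) ^ 2)
    / ENNReal.ofReal (t ^ (n + 1))

variable {n : ℕ}

theorem lusinSa_rpow_two (α : ℝ) (f : EuclideanSpace ℝ (Fin n) → ℂ)
    (x : EuclideanSpace ℝ (Fin n)) :
    lusinSa n α f x ^ (2 : ℝ) = ∫⁻ t in Set.Ioi 0, lusinSaDensity n α f x t := by
  rw [lusinSa, ← ENNReal.rpow_mul, one_div_mul_cancel two_ne_zero, ENNReal.rpow_one]
  rfl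

theorem ofReal_le_lusinSaDensity {α a δ t : ℝ} {f : EuclideanSpace ℝ (Fin n) → ℂ}
    {x : EuclideanSpace ℝ (Fin n)} (ha : 0 ≤ a) (ht : 0 < t) (hsub : closedBall 0 δ ⊆ ball x t)
    (hlow : ∀ y ∈ closedBall 0 δ, a ≤ ‖ballAvg f t y - f y‖) :
    ENNReal.ofReal (a ^ 2 * volume.real (closedBall (0 : EuclideanSpace ℝ (Fin n)) δ)
      / t ^ (2 * α + n + 1)) ≤ lusinSaDensity n α f x t := by
  have hdiff : ∀ y ∈ closedBall 0 δ,
      a / t ^ α ≤ ‖(ballAvg f t y - f y) / ((t ^ α : ℝ) : ℂ)‖ := fun y hy => by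
    rw [norm_div, norm_real, Real.norm_of_nonneg (by positivity)]
    gcongr
    exact hlow y hy
  have hpow : t ^ (2 * α + n + 1) = (t ^ α) ^ 2 * t ^ (n + 1) := by
    rw [← Real.rpow_natCast, ← Real.rpow_natCast, ← Real.rpow_mul ht.le, ← Real.rpow_add ht]
    push_cast
    ring_nf
  calc ENNReal.ofReal (a ^ 2 * volume.real (closedBall (0 : EuclideanSpace ℝ (Fin n)) δ)
        / t ^ (2 * α + n + 1))
      = ENNReal.ofReal ((a / t ^ α) ^ 2) * volume (closedBall (0 : EuclideanSpace ℝ (Fin n)) δ)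
          / ENNReal.ofReal (t ^ (n + 1)) := by
        rw [hpow, ← div_div, mul_div_right_comm, ← div_pow, ENNReal.ofReal_div_of_pos
          (by positivity), ENNReal.ofReal_mul (by positivity),
          ofReal_measureReal measure_closedBall_lt_top.ne]
    _ ≤ lusinSaDensity n α f x t := by
        rw [lusinSaDensity]
        gcongr
        exact ofReal_sq_mul_measure_le_setLIntegral (by positivity) measurableSet_closedBall
          hsub hdiff

theorem exists_ofReal_rpow_neg_norm_le_lusinSa_sq (hn : 0 < n) {α : ℝ} (hα : 0 ≤ α)
    {f : EuclideanSpace ℝ (Fin n) → ℂ} (hf : Integrable f) (hf0 : ContinuousAt f 0)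
    (hf0' : f 0 ≠ 0) :
    ∃ c > 0, ∃ R > 0, ∀ x, R ≤ ‖x‖ →
      ENNReal.ofReal (c * ‖x‖ ^ (-(2 * α + n))) ≤ lusinSa n α f x ^ (2 : ℝ) := by
  obtain ⟨a, ha, haf⟩ := exists_between (norm_pos_iff.2 hf0')
  obtain ⟨δ, hδ, T, hT, hlow⟩ := exists_le_norm_ballAvg_sub hn hf hf0 haf
  set V := volume.real (closedBall (0 : EuclideanSpace ℝ (Fin n)) δ)
  have hV : 0 < V := ENNReal.toReal_pos (measure_closedBall_pos volume 0 hδ).ne'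
    measure_closedBall_lt_top.ne
  set s := 2 * α + n + 1
  refine ⟨a ^ 2 * V / 3 ^ s, by positivity, max δ T, by positivity, fun x hx => ?_⟩
  set r := ‖x‖
  have hr : 0 < r := hδ.trans_le (le_of_max_le_left hx)
  -- for `t ∈ (2r, 3r]` the ball `B(x, t)` contains `B(0, δ)`, and `t ≥ T`
  have hdensity : ∀ t ∈ Set.Ioc (2 * r) (3 * r),
      ENNReal.ofReal (a ^ 2 * V / (3 * r) ^ s) ≤ lusinSaDensity n α f x t := by
    rintro t ⟨ht2, ht3⟩
    have ht : 0 < t := by linarith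
    refine le_trans (ENNReal.ofReal_le_ofReal ?_) (ofReal_le_lusinSaDensity ha.le ht ?_
      (hlow t (by linarith [le_of_max_le_right hx])))
    · gcongr
    · intro y hy
      rw [mem_closedBall, dist_zero_right] at hy
      rw [mem_ball, dist_eq_norm]
      linarith [norm_sub_le y x, le_of_max_le_left hx]
  have hconst : a ^ 2 * V / 3 ^ s * r ^ (-(2 * α + n)) = a ^ 2 * V / (3 * r) ^ s * r := by
    rw [Real.mul_rpow (by norm_num) hr.le, Real.rpow_neg hr.le, Real.rpow_add_one hr.ne']
    field_simp
  calc ENNReal.ofReal (a ^ 2 * V / 3 ^ s * r ^ (-(2 * α + n)))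
      = ENNReal.ofReal (a ^ 2 * V / (3 * r) ^ s) * volume (Set.Ioc (2 * r) (3 * r)) := by
        rw [Real.volume_Ioc, ← ENNReal.ofReal_mul (by positivity), hconst]
        ring_nf
    _ ≤ ∫⁻ t in Set.Ioc (2 * r) (3 * r), lusinSaDensity n α f x t := by
        rw [← setLIntegral_const]
        exact setLIntegral_mono' measurableSet_Ioc hdensity
    _ ≤ ∫⁻ t in Set.Ioi 0, lusinSaDensity n α f x t :=
        lintegral_mono_set fun t ht => (by positivity : (0 : ℝ) < 2 * r).trans ht.1
    _ = lusinSa n α f x ^ (2 : ℝ) := (lusinSa_rpow_two α f x).symm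

theorem exists_ofReal_rpow_neg_norm_le_lusinSa_rpow (hn : 0 < n) {α : ℝ} (hα : 0 ≤ α)
    {f : EuclideanSpace ℝ (Fin n) → ℂ} (hf : Integrable f) (hf0 : ContinuousAt f 0)
    (hf0' : f 0 ≠ 0) {q : ℝ} (hq : 0 < q) :
    ∃ c > 0, ∃ R > 0, ∀ x, R ≤ ‖x‖ →
      ENNReal.ofReal (c * ‖x‖ ^ (-((2 * α + n) * (q / 2)))) ≤ lusinSa n α f x ^ q := by
  obtain ⟨c, hc, R, hR, hS⟩ := exists_ofReal_rpow_neg_norm_le_lusinSa_sq hn hα hf hf0 hf0'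
  refine ⟨c ^ (q / 2), by positivity, R, hR, fun x hx => ?_⟩
  have hx0 : 0 ≤ ‖x‖ := norm_nonneg x
  calc ENNReal.ofReal (c ^ (q / 2) * ‖x‖ ^ (-((2 * α + n) * (q / 2))))
      = ENNReal.ofReal (c * ‖x‖ ^ (-(2 * α + n))) ^ (q / 2) := by
        rw [ENNReal.ofReal_rpow_of_nonneg (by positivity) (by positivity),
          Real.mul_rpow hc.le (by positivity), ← Real.rpow_mul hx0, neg_mul]
    _ ≤ (lusinSa n α f x ^ (2 : ℝ)) ^ (q / 2) := by gcongr; exact hS x hx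
    _ = lusinSa n α f x ^ q := by rw [← ENNReal.rpow_mul]; ring_nf

end LusinArea

section FourierMultiplier

variable {V : Type*} [NormedAddCommGroup V] [InnerProductSpace ℝ V]

theorem contDiff_ofReal_rpow_norm_mul {g : V → ℂ} (hg : ContDiff ℝ ∞ g) (hg0 : g =ᶠ[𝓝 0] 0)
    {c : ℝ} (hc : c ≠ 0) (α : ℝ) :
    ContDiff ℝ ∞ fun ξ => (((c * ‖ξ‖) ^ α : ℝ) : ℂ) * g ξ := by
  refine contDiff_iff_contDiffAt.2 fun ξ => ?_
  rcases eq_or_ne ξ 0 with rfl | hξ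
  · exact (contDiffAt_const (c := (0 : ℂ))).congr_of_eventuallyEq
      (hg0.mono fun η hη => by simp [hη])
  · have hrpow : ContDiffAt ℝ ∞ (fun η : V => (c * ‖η‖) ^ α) ξ :=
      (contDiffAt_const.mul (contDiffAt_norm ℝ hξ)).rpow_const_of_ne
        (mul_ne_zero hc (norm_ne_zero_iff.2 hξ))
    exact (ofRealCLM.contDiff.contDiffAt.comp ξ hrpow).mul hg.contDiffAt

variable [FiniteDimensional ℝ V] [MeasurableSpace V] [BorelSpace V]

theorem exists_schwartz_hasCompactSupport_eventuallyEq_zero_integral_ne_zero [Nontrivial V] :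
    ∃ h : SchwartzMap V ℂ, HasCompactSupport h ∧ h =ᶠ[𝓝 0] 0 ∧ ∫ ξ, h ξ ≠ 0 := by
  obtain ⟨ξ₀, hξ₀⟩ := exists_norm_eq V zero_le_one
  let b : ContDiffBump ξ₀ := ⟨1 / 4, 1 / 2, by norm_num, by norm_num⟩
  have hsupp : HasCompactSupport fun ξ => ((b ξ : ℝ) : ℂ) :=
    b.hasCompactSupport.comp_left ofReal_zero
  refine ⟨hsupp.toSchwartzMap (ofRealCLM.contDiff.comp b.contDiff), hsupp, ?_, ?_⟩
  · filter_upwards [ball_mem_nhds (0 : V) (by norm_num : (0 : ℝ) < 1 / 2)] with ξ hξ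
    rw [mem_ball, dist_zero_right] at hξ
    have hfar : b.rOut ≤ dist ξ ξ₀ := by
      show 1 / 2 ≤ dist ξ ξ₀
      rw [dist_eq_norm']
      linarith [norm_sub_norm_le ξ₀ ξ]
    change ((b ξ : ℝ) : ℂ) = 0
    rw [b.zero_of_le_dist hfar, ofReal_zero]
  · change ∫ ξ, ((b ξ : ℝ) : ℂ) ≠ 0
    rw [integral_complex_ofReal, ofReal_ne_zero]
    exact b.integral_pos.ne'

end FourierMultiplier

section FractionalLaplacian

variable {n : ℕ}

theorem exists_fracLapFun_fourierInv_eq_schwartz (α : ℝ)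
    {h : SchwartzMap (EuclideanSpace ℝ (Fin n)) ℂ} (hc : HasCompactSupport h)
    (h0 : h =ᶠ[𝓝 0] 0) :
    ∃ g : SchwartzMap (EuclideanSpace ℝ (Fin n)) ℂ,
      fracLapFun α ⇑(𝓕⁻ h : SchwartzMap (EuclideanSpace ℝ (Fin n)) ℂ) = ⇑g := by
  have hm : HasCompactSupport fun ξ : EuclideanSpace ℝ (Fin n) =>
      (((2 * Real.pi * ‖ξ‖) ^ α : ℝ) : ℂ) * h ξ := hc.mul_left
  refine ⟨𝓕⁻ (hm.toSchwartzMap (contDiff_ofReal_rpow_norm_mul h.smooth' h0 (by positivity) α)),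
    ?_⟩
  have hh : 𝓕 ⇑(𝓕⁻ h : SchwartzMap (EuclideanSpace ℝ (Fin n)) ℂ) = ⇑h := by
    rw [← SchwartzMap.fourier_coe, FourierInvPair.fourier_fourierInv_eq]
  rw [fracLapFun, hh, SchwartzMap.fourierInv_coe]
  rfl

theorem exists_schwartz_apply_zero_ne_zero_fracLapFun_eq_schwartz (hn : 0 < n) (α : ℝ) :
    ∃ ψ g : SchwartzMap (EuclideanSpace ℝ (Fin n)) ℂ, ψ 0 ≠ 0 ∧ fracLapFun α ⇑ψ = ⇑g := by
  have : Nonempty (Fin n) := ⟨⟨0, hn⟩⟩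
  obtain ⟨h, hc, h0, hint⟩ := exists_schwartz_hasCompactSupport_eventuallyEq_zero_integral_ne_zero
    (V := EuclideanSpace ℝ (Fin n))
  obtain ⟨g, hg⟩ := exists_fracLapFun_fourierInv_eq_schwartz α hc h0
  refine ⟨𝓕⁻ h, g, ?_, hg⟩
  simpa [SchwartzMap.fourierInv_coe, Real.fourierInv_eq'] using hint

end FractionalLaplacian

theorem stmt_8_general (n : ℕ) (hn : 0 < n) (α : ℝ) (hα : α ∈ Set.Ioo (0 : ℝ) 2)
    (p : ℝ) (hp : 1 < p)
    (h : ∃ C : ℝ, 0 < C ∧ ∀ f : SchwartzMap (EuclideanSpace ℝ (Fin n)) ℂ,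
      lpNormE (lusinSa n α ⇑f) p volume ≤
        ENNReal.ofReal C * eLpNorm (fracLapFun α ⇑f) (ENNReal.ofReal p) volume) :
    2 * (n : ℝ) / (2 * α + n) ≤ p := by
  obtain ⟨C, -, hC⟩ := h
  obtain ⟨ψ, g, hψ0, hg⟩ := exists_schwartz_apply_zero_ne_zero_fracLapFun_eq_schwartz hn α
  by_contra! hlt
  have hp0 : 0 < p := by linarith
  obtain ⟨c, hc, R, hR, hS⟩ := exists_ofReal_rpow_neg_norm_le_lusinSa_rpow hn hα.1.le
    ψ.integrable ψ.continuous.continuousAt hψ0 hp0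
  have : Nonempty (Fin n) := ⟨⟨0, hn⟩⟩
  have hs : (2 * α + n) * (p / 2) ≤ Module.finrank ℝ (EuclideanSpace ℝ (Fin n)) := by
    rw [finrank_euclideanSpace_fin]
    rw [lt_div_iff₀ (by linarith [hα.1])] at hlt
    linarith
  have hS_top : lpNormE (lusinSa n α ⇑ψ) p volume = ⊤ := by
    rw [lpNormE, lintegral_eq_top_of_ofReal_rpow_neg_norm_le volume hc hR hs hS]
    exact ENNReal.top_rpow_of_pos (by positivity)
  have hbound := hC ψ
  rw [hS_top, hg] at hbound
  exact (ENNReal.mul_lt_top ENNReal.ofReal_lt_top (g.eLpNorm_lt_top _ volume)).not_ge hbound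

/-- Let `n ∈ ℕ`, `α ∈ (0,2)` with `n > 2α`, and `p ∈ (1,∞)`. If there is
`C > 0` with `‖S_α(f)‖_{Lᵖ} ≤ C‖(−Δ)^{α/2}f‖_{Lᵖ}` for every Schwartz function `f`,
then `p ≥ 2n/(2α+n)`. -/
theorem stmt_8 (n : ℕ) (hn : 0 < n) (α : ℝ) (hα : α ∈ Set.Ioo (0 : ℝ) 2)
    (hna : 2 * α < n) (p : ℝ) (hp : 1 < p)
    (h : ∃ C : ℝ, 0 < C ∧ ∀ f : SchwartzMap (EuclideanSpace ℝ (Fin n)) ℂ,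
      lpNormE (lusinSa n α ⇑f) p volume ≤
        ENNReal.ofReal C * eLpNorm (fracLapFun α ⇑f) (ENNReal.ofReal p) volume) :
    2 * (n : ℝ) / (2 * α + n) ≤ p :=
  stmt_8_general n hn α hα p hp h
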